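/- Fix t > 0, ε > 0, β, ρ ∈ ℝ, let δ = -|β| - |ρ|/t + √((|β| + |ρ|/t)² + 2ε/t), let γ₀ ≥ 0, and let ν be a Borel measure on ℝ concentrated on (0,∞) with ∫ min(x,1) ν(dx) < ∞ and ∫_{x>1} e^{rx} ν(dx) < ∞ for all r < ε. Then for every fixed A < 0, the function u ↦ ∫₀ᵗ θ_L(u·f_u(A,s)) ds is complex differentiable (analytic) on the open strip S = {u ∈ ℂ : |Re u| < δ}. -/

import Mathlib

open MeasureTheory

/-- `u·f_u(A,s) = ((e^{A(t-s)} - 1)/A)(uβ + u²/2) + ρu` for complex `u`. -/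
noncomputable def ufc (t β ρ : ℝ) (u : ℂ) (A s : ℝ) : ℂ :=
  (((Real.exp (A * (t - s)) - 1) / A : ℝ) : ℂ) * (u * (β : ℂ) + u ^ 2 / 2) + (ρ : ℂ) * u

/-- `θ_L(z) = γ₀ z + ∫_{(0,∞)} (e^{zx} - 1) ν(dx)`. -/
noncomputable def thetaL (γ₀ : ℝ) (ν : Measure ℝ) (z : ℂ) : ℂ :=
  (γ₀ : ℂ) * z + ∫ x in Set.Ioi (0 : ℝ), (Complex.exp (z * (x : ℂ)) - 1) ∂ν

/-!
`θ_L` is holomorphic on the half-plane `Re z < ε`: differentiating under `∫ dν`, the derivative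
`x e^{zx}` is dominated near `z₀` by `x e^{rx}` for some `r < ε`, which is integrable near `0`
because `∫ min(x, 1) dν < ∞` and near `∞` by the exponential moments. For `A < 0` the coefficient
`(e^{A(t-s)} - 1)/A` lies in `[0, t]`, so `|Re u| < δ` forces `Re (u f_u(A, s)) < ε`: `δ` is
exactly the positive root of `t (|β| a + a²/2) + |ρ| a = ε`. Hence `θ_L(u f_u(A, s))` is
holomorphic in `u` with a derivative jointly continuous in `(u, s)`, and differentiation under
the integral over the compact interval `[0, t]` applies.
-/

open Set Metric Filter
open scoped Interval

theorem differentiableOn_intervalIntegral_of_hasDerivAt {𝕜 E : Type*} [RCLike 𝕜]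
    [NormedAddCommGroup E] [NormedSpace ℝ E] [NormedSpace 𝕜 E]
    {U : Set 𝕜} (hU : IsOpen U) {F F' : 𝕜 → ℝ → E} {a b : ℝ}
    (hF : ∀ u ∈ U, ContinuousOn (F u) (uIcc a b))
    (hF' : ContinuousOn (Function.uncurry F') (U ×ˢ uIcc a b))
    (hderiv : ∀ u ∈ U, ∀ s ∈ uIcc a b, HasDerivAt (F · s) (F' u s) u) :
    DifferentiableOn 𝕜 (fun u => ∫ s in a..b, F u s) U := by
  intro u₀ hu₀
  obtain ⟨R, hR, hballU⟩ := Metric.isOpen_iff.1 hU u₀ hu₀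
  have hclosed : closedBall u₀ (R / 2) ⊆ U :=
    (closedBall_subset_ball (half_lt_self hR)).trans hballU
  obtain ⟨C, hC⟩ := ((isCompact_closedBall u₀ (R / 2)).prod
    isCompact_uIcc).exists_bound_of_continuousOn (hF'.mono (prod_mono hclosed subset_rfl))
  have hIoc : volume.restrict (Ι a b) ≤ volume.restrict (uIcc a b) :=
    Measure.restrict_mono uIoc_subset_uIcc le_rfl
  have hF'₀ : ContinuousOn (F' u₀) (uIcc a b) :=
    hF'.comp (continuousOn_const.prodMk continuousOn_id) fun s hs => ⟨hu₀, hs⟩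
  refine (intervalIntegral.hasDerivAt_integral_of_dominated_loc_of_deriv_le (bound := fun _ => C)
    (ball_mem_nhds u₀ (half_pos hR)) ?_ ((hF u₀ hu₀).intervalIntegrable)
    ((hF'₀.aestronglyMeasurable measurableSet_uIcc).mono_measure hIoc) ?_
    intervalIntegrable_const ?_).2.differentiableAt.differentiableWithinAt
  · filter_upwards [hU.mem_nhds hu₀] with u hu
    exact ((hF u hu).aestronglyMeasurable measurableSet_uIcc).mono_measure hIoc
  · exact ae_of_all _ fun s hs u hu =>
      hC (u, s) ⟨ball_subset_closedBall hu, uIoc_subset_uIcc hs⟩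
  · exact ae_of_all _ fun s hs u hu =>
      hderiv u (hclosed (ball_subset_closedBall hu)) s (uIoc_subset_uIcc hs)

theorem Complex.norm_exp_sub_one_le_mul_exp_max (w : ℂ) :
    ‖Complex.exp w - 1‖ ≤ ‖w‖ * Real.exp (max w.re 0) := by
  set S : Set ℂ := {v | v.re ≤ max w.re 0}
  have hS : Convex ℝ S := convex_halfSpace_le Complex.reLm.isLinear _
  have hbound : ∀ v ∈ S, ‖Complex.exp v‖ ≤ Real.exp (max w.re 0) := fun v hv => by
    rw [Complex.norm_exp]; exact Real.exp_le_exp.2 hv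
  simpa [mul_comm] using hS.norm_image_sub_le_of_norm_hasDerivWithin_le
    (fun v _ => (Complex.hasDerivAt_exp v).hasDerivWithinAt) hbound
    (show (0 : ℂ) ∈ S by simp [S]) (show w ∈ S by simp [S])

theorem Real.mul_exp_le_exp_div_sub {r r' : ℝ} (h : r < r') (x : ℝ) :
    x * Real.exp (r * x) ≤ Real.exp (r' * x) / (r' - r) := by
  have hlin : (r' - r) * x ≤ Real.exp ((r' - r) * x) := by
    linarith [Real.add_one_le_exp ((r' - r) * x)]
  rw [le_div_iff₀ (sub_pos.2 h)]
  calc x * Real.exp (r * x) * (r' - r) = (r' - r) * x * Real.exp (r * x) := by ring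
    _ ≤ Real.exp ((r' - r) * x) * Real.exp (r * x) :=
        mul_le_mul_of_nonneg_right hlin (Real.exp_pos _).le
    _ = Real.exp (r' * x) := by rw [← Real.exp_add]; ring_nf

theorem integrableOn_Ioi_mul_exp {ν : Measure ℝ} {ε r : ℝ}
    (hmin : Integrable (fun x : ℝ => min x 1) ν)
    (hexp : ∀ r : ℝ, r < ε → IntegrableOn (fun x : ℝ => Real.exp (r * x)) {x | 1 < x} ν)
    (hr : r < ε) :
    IntegrableOn (fun x => x * Real.exp (r * x)) (Ioi 0) ν := by
  have hmeas : AEStronglyMeasurable (fun x : ℝ => x * Real.exp (r * x)) ν := by fun_prop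
  rw [← Ioc_union_Ioi_eq_Ioi zero_le_one]
  refine IntegrableOn.union ?_ ?_
  · refine (hmin.integrableOn.const_mul (Real.exp |r|)).mono' hmeas.restrict ?_
    refine (ae_restrict_iff' measurableSet_Ioc).2 (ae_of_all _ fun x ⟨hx0, hx1⟩ => ?_)
    rw [min_eq_left hx1, Real.norm_of_nonneg (by positivity), mul_comm]
    gcongr
    calc r * x ≤ |r| * 1 := mul_le_mul (le_abs_self r) hx1 hx0.le (abs_nonneg r)
      _ = |r| := mul_one _
  · obtain ⟨r', hrr', hr'ε⟩ := exists_between hr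
    refine ((hexp r' hr'ε).div_const (r' - r)).mono' hmeas.restrict ?_
    refine (ae_restrict_iff' measurableSet_Ioi).2 (ae_of_all _ fun x (hx : 1 < x) => ?_)
    rw [Real.norm_of_nonneg (by positivity)]
    exact Real.mul_exp_le_exp_div_sub hrr' x

theorem hasDerivAt_integral_exp_mul_sub_one {ν : Measure ℝ} {ε : ℝ} (hε : 0 < ε)
    (hmin : Integrable (fun x : ℝ => min x 1) ν)
    (hexp : ∀ r : ℝ, r < ε → IntegrableOn (fun x : ℝ => Real.exp (r * x)) {x | 1 < x} ν)
    {z₀ : ℂ} (hz₀ : z₀.re < ε) :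
    HasDerivAt (fun z : ℂ => ∫ x in Ioi (0 : ℝ), (Complex.exp (z * x) - 1) ∂ν)
      (∫ x in Ioi (0 : ℝ), Complex.exp (z₀ * x) * x ∂ν) z₀ := by
  obtain ⟨r, hz₀r, hrε⟩ := exists_between hz₀
  have hball : ∀ z ∈ ball z₀ (r - z₀.re), z.re < r := fun z hz => by
    have hre := (Complex.abs_re_le_norm (z - z₀)).trans_lt (mem_ball_iff_norm.1 hz)
    rw [Complex.sub_re] at hre
    linarith [le_abs_self (z.re - z₀.re)]
  have hpos : ∀ᵐ x ∂(ν.restrict (Ioi 0)), (0 : ℝ) < x := ae_restrict_mem measurableSet_Ioi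
  have hint₀ : IntegrableOn (fun x : ℝ => x * Real.exp (max z₀.re 0 * x)) (Ioi 0) ν :=
    integrableOn_Ioi_mul_exp hmin hexp (max_lt hz₀ hε)
  refine (hasDerivAt_integral_of_dominated_loc_of_deriv_le
    (F := fun (z : ℂ) (x : ℝ) => Complex.exp (z * x) - 1)
    (F' := fun (z : ℂ) (x : ℝ) => Complex.exp (z * x) * x)
    (bound := fun x => x * Real.exp (r * x)) (ball_mem_nhds z₀ (sub_pos.2 hz₀r))
    (Eventually.of_forall fun z => by fun_prop) ?_ (by fun_prop) ?_
    (integrableOn_Ioi_mul_exp hmin hexp hrε) ?_).2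
  · refine (hint₀.const_mul ‖z₀‖).mono' (by fun_prop) (hpos.mono fun x hx => ?_)
    calc ‖Complex.exp (z₀ * x) - 1‖ ≤ ‖z₀ * x‖ * Real.exp (max (z₀ * x).re 0) :=
          Complex.norm_exp_sub_one_le_mul_exp_max _
      _ = ‖z₀‖ * (x * Real.exp (max z₀.re 0 * x)) := by
          rw [Complex.re_mul_ofReal, max_mul_of_nonneg _ _ hx.le, zero_mul, norm_mul,
            Complex.norm_real, Real.norm_of_nonneg hx.le]
          ring
  · refine hpos.mono fun x hx z hz => ?_
    rw [norm_mul, Complex.norm_exp, Complex.norm_real, Real.norm_of_nonneg hx.le, mul_comm,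
      Complex.re_mul_ofReal]
    gcongr
    exact (hball z hz).le
  · refine Eventually.of_forall fun x z _ => ?_
    simpa using ((hasDerivAt_id z).mul_const (x : ℂ)).cexp.sub_const 1

theorem differentiableOn_thetaL (γ₀ : ℝ) {ν : Measure ℝ} {ε : ℝ} (hε : 0 < ε)
    (hmin : Integrable (fun x : ℝ => min x 1) ν)
    (hexp : ∀ r : ℝ, r < ε → IntegrableOn (fun x : ℝ => Real.exp (r * x)) {x | 1 < x} ν) :
    DifferentiableOn ℂ (thetaL γ₀ ν) {z | z.re < ε} := fun _ hz =>
  ((differentiableAt_id.const_mul _).add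
    (hasDerivAt_integral_exp_mul_sub_one hε hmin hexp hz).differentiableAt).differentiableWithinAt

theorem Real.exp_mul_sub_one_div_mem_Icc {A τ : ℝ} (hA : A < 0) (hτ : 0 ≤ τ) :
    (Real.exp (A * τ) - 1) / A ∈ Icc 0 τ := by
  have hAτ : A * τ ≤ 0 := mul_nonpos_of_nonpos_of_nonneg hA.le hτ
  constructor
  · exact div_nonneg_of_nonpos (by linarith [Real.exp_le_one_iff.2 hAτ]) hA.le
  · rw [div_le_iff_of_neg hA]
    linarith [Real.add_one_le_exp (A * τ)]

theorem ufc_re (t β ρ : ℝ) (u : ℂ) (A s : ℝ) :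
    (ufc t β ρ u A s).re =
      (Real.exp (A * (t - s)) - 1) / A * (u.re * β + (u.re ^ 2 - u.im ^ 2) / 2) + ρ * u.re := by
  simp only [ufc, Complex.add_re, Complex.mul_re, Complex.ofReal_re, Complex.ofReal_im,
    Complex.div_ofNat_re, pow_two]
  ring

theorem ufc_re_le {t β ρ A s : ℝ} (hA : A < 0) (hs : s ∈ Icc 0 t) (u : ℂ) :
    (ufc t β ρ u A s).re ≤ t * (|β| * |u.re| + |u.re| ^ 2 / 2) + |ρ| * |u.re| := by
  obtain ⟨hc₀, hct⟩ := Real.exp_mul_sub_one_div_mem_Icc hA (sub_nonneg.2 hs.2)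
  have hβ : u.re * β ≤ |β| * |u.re| := by rw [mul_comm |β|, ← abs_mul]; exact le_abs_self _
  have hρ : ρ * u.re ≤ |ρ| * |u.re| := by rw [← abs_mul]; exact le_abs_self _
  have hquad : u.re * β + (u.re ^ 2 - u.im ^ 2) / 2 ≤ |β| * |u.re| + |u.re| ^ 2 / 2 := by
    linarith [sq_abs u.re, sq_nonneg u.im]
  rw [ufc_re]
  calc _ ≤ (Real.exp (A * (t - s)) - 1) / A * (|β| * |u.re| + |u.re| ^ 2 / 2) + |ρ| * |u.re| := by
        gcongr
    _ ≤ t * (|β| * |u.re| + |u.re| ^ 2 / 2) + |ρ| * |u.re| := by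
        gcongr
        linarith [hs.1]

theorem quadratic_lt_of_lt_root {t ε b p a : ℝ} (ht : 0 < t) (hε : 0 < ε) (hb : 0 ≤ b)
    (hp : 0 ≤ p) (ha : 0 ≤ a) (h : a < -b - p / t + Real.sqrt ((b + p / t) ^ 2 + 2 * ε / t)) :
    t * (b * a + a ^ 2 / 2) + p * a < ε := by
  set B := b + p / t
  have hB : 0 ≤ B := by positivity
  have hsq : (a + B) ^ 2 < B ^ 2 + 2 * ε / t := by
    calc (a + B) ^ 2 < Real.sqrt (B ^ 2 + 2 * ε / t) ^ 2 := by
          gcongr; linarith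
      _ = B ^ 2 + 2 * ε / t := Real.sq_sqrt (by positivity)
  have hBt : B * t = b * t + p := by simp only [B]; field_simp
  have hlin : (a ^ 2 + 2 * a * B) * t < 2 * ε := by
    rw [← lt_div_iff₀ ht]; nlinarith
  nlinarith

theorem ufc_re_lt {t ε β ρ A s : ℝ} (ht : 0 < t) (hε : 0 < ε) (hA : A < 0) (hs : s ∈ Icc 0 t)
    {u : ℂ} (hu : |u.re| < -|β| - |ρ| / t + Real.sqrt ((|β| + |ρ| / t) ^ 2 + 2 * ε / t)) :
    (ufc t β ρ u A s).re < ε :=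
  (ufc_re_le hA hs u).trans_lt <|
    quadratic_lt_of_lt_root ht hε (abs_nonneg β) (abs_nonneg ρ) (abs_nonneg _) hu

theorem hasDerivAt_ufc (t β ρ A s : ℝ) (u : ℂ) :
    HasDerivAt (fun u => ufc t β ρ u A s)
      (((Real.exp (A * (t - s)) - 1) / A : ℝ) * (β + u) + ρ) u := by
  unfold ufc
  refine ((((hasDerivAt_id' u).mul_const (β : ℂ)).add ((hasDerivAt_pow 2 u).div_const 2)).const_mul
    _ |>.add ((hasDerivAt_id' u).const_mul (ρ : ℂ))).congr_deriv ?_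
  push_cast
  ring

theorem stmt_7_general (t ε β ρ γ₀ : ℝ) (ht : 0 < t) (hε : 0 < ε)
    (ν : Measure ℝ)
    (hmin : Integrable (fun x : ℝ => min x 1) ν)
    (hexp : ∀ r : ℝ, r < ε → IntegrableOn (fun x : ℝ => Real.exp (r * x)) {x | 1 < x} ν) :
    ∀ A : ℝ, A < 0 →
      DifferentiableOn ℂ
        (fun u : ℂ => ∫ s in (0 : ℝ)..t, thetaL γ₀ ν (ufc t β ρ u A s))
        {u : ℂ | |u.re| < -|β| - |ρ| / t + Real.sqrt ((|β| + |ρ| / t) ^ 2 + 2 * ε / t)} := by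
  intro A hA
  set S := {u : ℂ | |u.re| < -|β| - |ρ| / t + Real.sqrt ((|β| + |ρ| / t) ^ 2 + 2 * ε / t)}
  set H := {z : ℂ | z.re < ε}
  have hθ : DifferentiableOn ℂ (thetaL γ₀ ν) H := differentiableOn_thetaL γ₀ hε hmin hexp
  have hH : IsOpen H := isOpen_lt Complex.continuous_re continuous_const
  have hg : Continuous fun p : ℂ × ℝ => ufc t β ρ p.1 A p.2 := by unfold ufc; fun_prop
  have hgH : ∀ u ∈ S, ∀ s ∈ uIcc 0 t, ufc t β ρ u A s ∈ H := fun u hu s hs =>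
    ufc_re_lt ht hε hA (uIcc_of_le ht.le ▸ hs) hu
  refine differentiableOn_intervalIntegral_of_hasDerivAt
    (F := fun u s => thetaL γ₀ ν (ufc t β ρ u A s))
    (F' := fun u s => deriv (thetaL γ₀ ν) (ufc t β ρ u A s) *
      ((((Real.exp (A * (t - s)) - 1) / A : ℝ) : ℂ) * (β + u) + ρ))
    (isOpen_lt (continuous_abs.comp Complex.continuous_re) continuous_const) ?_ ?_ ?_
  · exact fun u hu =>
      hθ.continuousOn.comp (hg.comp (Continuous.prodMk_right u)).continuousOn (hgH u hu)
  · exact ((hθ.deriv hH).continuousOn.comp hg.continuousOn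
      fun p hp => hgH p.1 hp.1 p.2 hp.2).mul (by fun_prop)
  · intro u hu s hs
    have hθu : HasDerivAt (thetaL γ₀ ν) (deriv (thetaL γ₀ ν) (ufc t β ρ u A s))
        (ufc t β ρ u A s) :=
      (hθ.differentiableAt (hH.mem_nhds (hgH u hu s hs))).hasDerivAt
    exact hθu.comp u (hasDerivAt_ufc t β ρ A s u)

theorem stmt_7 (t ε β ρ γ₀ : ℝ) (ht : 0 < t) (hε : 0 < ε) (hγ₀ : 0 ≤ γ₀)
    (ν : Measure ℝ) (hν : ν (Set.Ioi (0 : ℝ))ᶜ = 0)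
    (hmin : Integrable (fun x : ℝ => min x 1) ν)
    (hexp : ∀ r : ℝ, r < ε → IntegrableOn (fun x : ℝ => Real.exp (r * x)) {x | 1 < x} ν) :
    ∀ A : ℝ, A < 0 →
      DifferentiableOn ℂ
        (fun u : ℂ => ∫ s in (0 : ℝ)..t, thetaL γ₀ ν (ufc t β ρ u A s))
        {u : ℂ | |u.re| < -|β| - |ρ| / t + Real.sqrt ((|β| + |ρ| / t) ^ 2 + 2 * ε / t)} :=
  stmt_7_general t ε β ρ γ₀ ht hε ν hmin hexp
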